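/- Let M be a matroid on ground set S with injective weight function μ, and let I be a basis of M. Then I is the maximum-weight basis of M if and only if for every e ∈ S \ I, the set I^{≥μ(e)} = {x ∈ I : μ(x) ≥ μ(e)} blocks e. -/

import Mathlib

open Matroid Set

variable {α : Type*}

/-- The `ℕ∞`-valued rank of a set `X` in a matroid `M`:
the supremum of the sizes of independent subsets of `X`. -/
noncomputable def Matroid.eRank' (M : Matroid α) (X : Set α) : ℕ∞ :=
  ⨆ I ∈ {I | M.Indep I ∧ I ⊆ X}, I.encard

/-- A set `A` *blocks* an element `e` if adding `e` to `A` does not increase the rank. -/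
def Matroid.Blocks (M : Matroid α) (A : Set α) (e : α) : Prop :=
  M.eRank' (insert e A) = M.eRank' A

/-- The total weight of a set of elements. -/
noncomputable def wt (μ : α → ℝ) (I : Set α) : ℝ := ∑ᶠ e ∈ I, μ e

/-- `I` is a maximum-weight base of `M` with respect to the weight function `μ`. -/
def IsMaxWeightBase (M : Matroid α) (μ : α → ℝ) (I : Set α) : Prop :=
  M.IsBase I ∧ ∀ J, M.IsBase J → wt μ J ≤ wt μ I

/-- The modified cost function `μ_{I,ε}` adding `ε` to the weight of each element of `I`. -/
noncomputable def modCost (μ : α → ℝ) (I : Set α) (ε : ℝ) : α → ℝ :=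
  fun e => μ e + I.indicator (fun _ => ε) e

/-- `I` is an `ε`-optimal base of `M` w.r.t. `μ`:
it is a maximum-weight base for the modified cost `μ_{I,ε}`. -/
def EpsOptimal (M : Matroid α) (μ : α → ℝ) (ε : ℝ) (I : Set α) : Prop :=
  IsMaxWeightBase M (modCost μ I ε) I

/-- Contraction of a matroid, defined by duality: `M ／ C = (M✶ ↾ (M.E \ C))✶`. -/
noncomputable def Matroid.contract' (M : Matroid α) (C : Set α) : Matroid α :=
  (M✶ ↾ (M.E \ C))✶

/-- The weight of a maximum-weight base of `M` with respect to `μ`. -/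
noncomputable def OPTval (M : Matroid α) (μ : α → ℝ) : ℝ :=
  sSup ((fun B => wt μ B) '' {B | M.IsBase B})

/-!
Both directions are single-element exchanges. If `I` is optimal and some `e ∉ I` is not spanned
by the elements of `I` at least as heavy as `e`, then the fundamental circuit of `e` in `I`
contains a lighter `f ∈ I`, and `I - f + e` is a heavier base. Conversely, if every such `e` is
spanned, then any base `J ≠ I` can be moved one step towards `I` by swapping some `e ∈ J \ I`
for an `f ∈ I` with `μ e ≤ μ f`, which does not decrease the weight; induction on `|J \ I|`.
-/

namespace Matroid

variable {M : Matroid α} {B D X : Set α} {e : α}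

lemma eRank'_eq_eRk (M : Matroid α) (X : Set α) : M.eRank' X = M.eRk X := by
  refine le_antisymm (iSup₂_le fun J hJ => hJ.1.encard_le_eRk_of_subset hJ.2) ?_
  obtain ⟨J, hJ⟩ := M.exists_isBasis' X
  exact hJ.eRk_eq_encard.trans_le <|
    le_iSup₂ (f := fun J _ => J.encard) J ⟨hJ.indep, hJ.subset⟩

lemma blocks_iff_mem_closure [M.RankFinite] (he : e ∈ M.E) :
    M.Blocks X e ↔ e ∈ M.closure X := by
  rw [Blocks, eRank'_eq_eRk, eRank'_eq_eRk]
  refine ⟨fun h => by_contra fun heX => ?_, fun heX => ?_⟩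
  · rw [eRk_insert_eq_add_one ⟨he, heX⟩] at h
    exact ((ENat.lt_add_one_iff (M.isRkFinite_set X).eRk_lt_top.ne).2 le_rfl).ne h.symm
  · rw [← eRk_insert_closure_eq, insert_eq_of_mem heX, eRk_closure_eq]

lemma IsBase.exists_exchange_of_notMem_closure (hB : M.IsBase B) (he : e ∈ M.E \ B)
    (heD : e ∉ M.closure D) : ∃ f ∈ B \ D, M.IsBase (insert e (B \ {f})) := by
  have hC := hB.fundCircuit_isCircuit he.1 he.2
  obtain ⟨f, ⟨hfC, hfe⟩, hfD⟩ := not_subset.mp fun h : M.fundCircuit e B \ {e} ⊆ D =>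
    heD <| M.closure_subset_closure h <|
      hC.mem_closure_sdiff_singleton_of_mem (M.mem_fundCircuit e B)
  have hfB : f ∈ B := (M.fundCircuit_subset_insert e B hfC).resolve_left hfe
  have hind := (hB.indep.mem_fundCircuit_iff (by rw [hB.closure_eq]; exact he.1) he.2).mp hfC
  rw [← insert_sdiff_singleton_comm (Ne.symm hfe)] at hind
  exact ⟨f, ⟨hfB, hfD⟩, hB.exchange_isBase_of_indep he.2 hind⟩

lemma IsBase.exists_exchange_of_mem_closure (hB : M.IsBase B) (he : e ∈ B) (hD : D ⊆ M.E)
    (heD : e ∈ M.closure D) (heD' : e ∉ D) :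
    ∃ f ∈ D \ B, M.IsBase (insert f (B \ {e})) := by
  obtain ⟨f, hfD, hfcl⟩ := not_subset.mp fun h : D ⊆ M.closure (B \ {e}) =>
    hB.indep.notMem_closure_sdiff_of_mem he (M.closure_subset_closure_of_subset_closure h heD)
  have hfB : f ∉ B := fun hfB => hfcl (M.subset_closure _ (sdiff_subset.trans hB.subset_ground)
    ⟨hfB, fun hfe => heD' ((mem_singleton_iff.mp hfe) ▸ hfD)⟩)
  exact ⟨f, ⟨hfD, hfB⟩, hB.exchange_base_of_notMem_closure he hfcl (hD hfD)⟩

end Matroid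

lemma wt_insert_sdiff_singleton {μ : α → ℝ} {A : Set α} {e f : α} (hA : A.Finite) (hf : f ∈ A)
    (he : e ∉ A) : wt μ (insert e (A \ {f})) = wt μ A + μ e - μ f := by
  have hA' := finsum_mem_insert μ (a := f) (s := A \ {f}) (fun h => h.2 rfl) hA.sdiff
  rw [insert_sdiff_singleton, insert_eq_of_mem hf] at hA'
  rw [wt, wt, hA', finsum_mem_insert μ (fun h => he h.1) hA.sdiff]
  ring

section

variable {M : Matroid α} [M.RankFinite] {μ : α → ℝ} {I : Set α}

lemma IsMaxWeightBase.mem_closure (h : IsMaxWeightBase M μ I) {e : α} (he : e ∈ M.E \ I) :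
    e ∈ M.closure {x ∈ I | μ e ≤ μ x} := by
  by_contra heD
  obtain ⟨f, ⟨hfI, hfD⟩, hB⟩ := h.1.exists_exchange_of_notMem_closure he heD
  have hlt : μ f < μ e := lt_of_not_ge fun hle => hfD ⟨hfI, hle⟩
  have hwt := h.2 _ hB
  rw [wt_insert_sdiff_singleton h.1.finite hfI he.2] at hwt
  linarith

lemma Matroid.IsBase.wt_le_of_forall_mem_closure (hI : M.IsBase I)
    (hcl : ∀ e ∈ M.E \ I, e ∈ M.closure {x ∈ I | μ e ≤ μ x}) {J : Set α} (hJ : M.IsBase J) :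
    wt μ J ≤ wt μ I := by
  obtain ⟨n, hn⟩ : ∃ n, (J \ I).ncard = n := ⟨_, rfl⟩
  induction n generalizing J with
  | zero =>
    rw [ncard_eq_zero hJ.finite.sdiff, sdiff_eq_empty] at hn
    rw [hJ.eq_of_subset_isBase hI hn]
  | succ n ih =>
    obtain ⟨e, heJ, heI⟩ := nonempty_of_ncard_ne_zero (hn.trans_ne n.succ_ne_zero)
    obtain ⟨f, ⟨⟨hfI, hef⟩, hfJ⟩, hB⟩ := hJ.exists_exchange_of_mem_closure heJ
      (fun x hx => hI.subset_ground hx.1) (hcl e ⟨hJ.subset_ground heJ, heI⟩) (fun h => heI h.1)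
    have hBI : (insert f (J \ {e}) \ I).ncard = n := by
      rw [insert_sdiff_of_mem _ hfI, sdiff_sdiff_comm,
        ncard_sdiff_singleton_of_mem (s := J \ I) ⟨heJ, heI⟩, hn, Nat.add_sub_cancel]
    calc wt μ J ≤ wt μ (insert f (J \ {e})) := by
          rw [wt_insert_sdiff_singleton hJ.finite heJ hfJ]; linarith
      _ ≤ wt μ I := ih hB hBI

end

theorem isMaxWeightBase_iff_blocks_general (M : Matroid α) [M.Finite] (μ : α → ℝ)
    (I : Set α) (hI : M.IsBase I) :
    IsMaxWeightBase M μ I ↔ ∀ e ∈ M.E \ I, M.Blocks {x ∈ I | μ e ≤ μ x} e := by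
  rw [forall₂_congr fun e he => M.blocks_iff_mem_closure (X := {x ∈ I | μ e ≤ μ x}) he.1]
  exact ⟨fun h e he => h.mem_closure he,
    fun h => ⟨hI, fun J hJ => hI.wt_le_of_forall_mem_closure h hJ⟩⟩

/-- A base `I` is the maximum-weight base iff every `e ∈ S \ I` is blocked by the
elements of `I` of weight at least `μ e`. -/
theorem isMaxWeightBase_iff_blocks (M : Matroid α) [M.Finite] (μ : α → ℝ)
    (hinj : Set.InjOn μ M.E) (hpos : ∀ e ∈ M.E, 0 < μ e)
    (I : Set α) (hI : M.IsBase I) :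
    IsMaxWeightBase M μ I ↔ ∀ e ∈ M.E \ I, M.Blocks {x ∈ I | μ e ≤ μ x} e :=
  isMaxWeightBase_iff_blocks_general M μ I hI
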